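/- Let R be a commutative integral domain with 1 that is a full subring of a complex commutative unital semisimple Banach algebra S (i.e., there is an injective ring homomorphism ι : R → S, and whenever ι(x) is invertible in S then x is invertible in R). For coprime factorizable plants p₁ = n₁/d₁, p₂ = n₂/d₂ over R, define κ(p₁,p₂) = sup over characters φ of S of |φ(n₁)φ(d₂) - φ(n₂)φ(d₁)| / (√(|φ(n₁)|² + |φ(d₁)|²)·√(|φ(n₂)|² + |φ(d₂)|²)). Then κ is a metric on the set S(R) of plants in F(R) admitting a coprime factorization over R: κ is well-defined (independent of choice of coprime factorization), nonnegative, symmetric, vanishes exactly when p₁ = p₂, and satisfies the triangle inequality. -/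

import Mathlib

/-!
For coprime `(n, d)` the Bézout identity gives `(φ (ι n), φ (ι d)) ≠ 0` at every character `φ`, so
`genChordal` is a supremum over characters of chordal distances between points of the complex
projective line. The chordal distance is bounded by `1`, depends only on the lines spanned, vanishes
exactly on proportional vectors and satisfies the triangle inequality; all of this passes to the
supremum. Definiteness uses semisimplicity: if `genChordal ι n₁ d₁ n₂ d₂ = 0`, every character
kills `ι (n₁ d₂ - n₂ d₁)`.
-/

open WeakDual

/-- The generalized chordal distance between (representatives of) two plants
`p₁ = n₁/d₁`, `p₂ = n₂/d₂` over `R ⊆ S`, defined as the supremum over the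
maximal ideal space (character space) of `S` of the pointwise chordal distance
of the Gelfand transforms. -/
noncomputable def genChordal {R S : Type*} [CommRing R]
    [NormedCommRing S] [NormedAlgebra ℂ S] [CompleteSpace S]
    (ι : R →+* S) (n₁ d₁ n₂ d₂ : R) : ℝ :=
  ⨆ φ : characterSpace ℂ S,
    ‖φ (ι n₁) * φ (ι d₂) - φ (ι n₂) * φ (ι d₁)‖ /
      (Real.sqrt (‖φ (ι n₁)‖ ^ 2 + ‖φ (ι d₁)‖ ^ 2) *
        Real.sqrt (‖φ (ι n₂)‖ ^ 2 + ‖φ (ι d₂)‖ ^ 2))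

/-- `(n, d)` is a coprime factorization (of `n/d`) over `R`: `d ≠ 0` and a
Bézout identity `nx + dy = 1` holds. -/
def IsCoprimeFactorization {R : Type*} [CommRing R] (n d : R) : Prop :=
  d ≠ 0 ∧ ∃ x y : R, n * x + d * y = 1

lemma mul_add_mul_le_sqrt_mul_sqrt (x y u v : ℝ) :
    x * u + y * v ≤ √(x ^ 2 + y ^ 2) * √(u ^ 2 + v ^ 2) := by
  rw [← Real.sqrt_mul (by positivity)]
  exact Real.le_sqrt_of_sq_le (by nlinarith [sq_nonneg (x * v - y * u)])

lemma sqrt_norm_sq_add_norm_sq_pos {E : Type*} [NormedAddCommGroup E] {a b : E}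
    (h : a ≠ 0 ∨ b ≠ 0) : 0 < √(‖a‖ ^ 2 + ‖b‖ ^ 2) := by
  rw [Real.sqrt_pos]
  rcases h with h | h
  · have := norm_pos_iff.mpr h; positivity
  · have := norm_pos_iff.mpr h; positivity

lemma exists_eq_mul_of_mul_eq_mul {K : Type*} [Field K] {a b a' b' : K} (hab : a ≠ 0 ∨ b ≠ 0)
    (h : a * b' = a' * b) : ∃ t, a' = t * a ∧ b' = t * b := by
  rcases hab with ha | hb
  · exact ⟨a' / a, by field_simp, by field_simp; linear_combination h⟩
  · exact ⟨b' / b, by field_simp; linear_combination -h, by field_simp⟩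

open scoped ComplexConjugate

section ChordalDistance

variable {𝕜 : Type*} [RCLike 𝕜]

lemma norm_mul_conj_add_mul_conj_le (a b c d : 𝕜) :
    ‖a * conj c + b * conj d‖ ≤ √(‖a‖ ^ 2 + ‖b‖ ^ 2) * √(‖c‖ ^ 2 + ‖d‖ ^ 2) :=
  calc ‖a * conj c + b * conj d‖ ≤ ‖a‖ * ‖c‖ + ‖b‖ * ‖d‖ := by
        simpa only [norm_mul, RCLike.norm_conj] using norm_add_le (a * conj c) (b * conj d)
    _ ≤ _ := mul_add_mul_le_sqrt_mul_sqrt _ _ _ _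

/-- The chordal distance between the points `[a : b]` and `[c : d]` of the projective line. -/
noncomputable def chordalDist (a b c d : 𝕜) : ℝ :=
  ‖a * d - c * b‖ / (√(‖a‖ ^ 2 + ‖b‖ ^ 2) * √(‖c‖ ^ 2 + ‖d‖ ^ 2))

lemma chordalDist_nonneg (a b c d : 𝕜) : 0 ≤ chordalDist a b c d := by
  unfold chordalDist; positivity

lemma chordalDist_comm (a b c d : 𝕜) : chordalDist a b c d = chordalDist c d a b := by
  rw [chordalDist, chordalDist, norm_sub_rev, mul_comm (√(‖a‖ ^ 2 + ‖b‖ ^ 2))]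

lemma chordalDist_le_one (a b c d : 𝕜) : chordalDist a b c d ≤ 1 := by
  refine div_le_one_of_le₀ ?_ (by positivity)
  calc ‖a * d - c * b‖ ≤ ‖a‖ * ‖d‖ + ‖b‖ * ‖c‖ := by
        simpa only [norm_mul, mul_comm ‖c‖] using norm_sub_le (a * d) (c * b)
    _ ≤ √(‖a‖ ^ 2 + ‖b‖ ^ 2) * √(‖d‖ ^ 2 + ‖c‖ ^ 2) := mul_add_mul_le_sqrt_mul_sqrt _ _ _ _
    _ = √(‖a‖ ^ 2 + ‖b‖ ^ 2) * √(‖c‖ ^ 2 + ‖d‖ ^ 2) := by rw [add_comm (‖d‖ ^ 2)]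

lemma chordalDist_mul_left {t : 𝕜} (ht : t ≠ 0) (a b c d : 𝕜) :
    chordalDist (t * a) (t * b) c d = chordalDist a b c d := by
  have hnum : t * a * d - c * (t * b) = t * (a * d - c * b) := by ring
  have hsqrt : √(‖t * a‖ ^ 2 + ‖t * b‖ ^ 2) = ‖t‖ * √(‖a‖ ^ 2 + ‖b‖ ^ 2) := by
    rw [norm_mul, norm_mul, mul_pow, mul_pow, ← mul_add, Real.sqrt_mul (sq_nonneg _),
      Real.sqrt_sq (norm_nonneg _)]
  rw [chordalDist, chordalDist, hnum, hsqrt, norm_mul, mul_assoc,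
    mul_div_mul_left _ _ (norm_ne_zero_iff.mpr ht)]

lemma chordalDist_congr_left {a b a' b' : 𝕜} (hab : a ≠ 0 ∨ b ≠ 0) (hab' : a' ≠ 0 ∨ b' ≠ 0)
    (h : a * b' = a' * b) (c d : 𝕜) : chordalDist a b c d = chordalDist a' b' c d := by
  obtain ⟨t, rfl, rfl⟩ := exists_eq_mul_of_mul_eq_mul hab h
  have ht : t ≠ 0 := by rintro rfl; simp at hab'
  rw [chordalDist_mul_left ht]

lemma chordalDist_eq_zero_iff {a b c d : 𝕜} (hab : a ≠ 0 ∨ b ≠ 0) (hcd : c ≠ 0 ∨ d ≠ 0) :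
    chordalDist a b c d = 0 ↔ a * d = c * b := by
  have := (sqrt_norm_sq_add_norm_sq_pos hab).ne'
  have := (sqrt_norm_sq_add_norm_sq_pos hcd).ne'
  simp only [chordalDist, div_eq_zero_iff, norm_eq_zero, sub_eq_zero, mul_eq_zero, *, or_self,
    or_false]

lemma norm_mul_conj_add_mul_conj_self (e f : 𝕜) :
    ‖e * conj e + f * conj f‖ = √(‖e‖ ^ 2 + ‖f‖ ^ 2) * √(‖e‖ ^ 2 + ‖f‖ ^ 2) := by
  rw [Real.mul_self_sqrt (by positivity), RCLike.mul_conj, RCLike.mul_conj, ← RCLike.ofReal_pow,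
    ← RCLike.ofReal_pow, ← RCLike.ofReal_add, RCLike.norm_of_nonneg (by positivity)]

/-- The triangle inequality for `chordalDist` before normalization: expand `a * d - c * b`
along the vector `(e, f)` and apply Cauchy–Schwarz to both terms. -/
lemma norm_mul_sub_mul_mul_le (a b c d e f : 𝕜) :
    ‖a * d - c * b‖ * (√(‖e‖ ^ 2 + ‖f‖ ^ 2) * √(‖e‖ ^ 2 + ‖f‖ ^ 2)) ≤
      ‖a * f - e * b‖ * (√(‖c‖ ^ 2 + ‖d‖ ^ 2) * √(‖e‖ ^ 2 + ‖f‖ ^ 2)) +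
        ‖e * d - c * f‖ * (√(‖a‖ ^ 2 + ‖b‖ ^ 2) * √(‖e‖ ^ 2 + ‖f‖ ^ 2)) := by
  have expand : (a * d - c * b) * (e * conj e + f * conj f) =
      (a * f - e * b) * (c * conj e + d * conj f) +
        (e * d - c * f) * (a * conj e + b * conj f) := by
    ring
  calc ‖a * d - c * b‖ * (√(‖e‖ ^ 2 + ‖f‖ ^ 2) * √(‖e‖ ^ 2 + ‖f‖ ^ 2))
      = ‖(a * d - c * b) * (e * conj e + f * conj f)‖ := by
        rw [norm_mul, norm_mul_conj_add_mul_conj_self]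
    _ ≤ ‖a * f - e * b‖ * ‖c * conj e + d * conj f‖ +
        ‖e * d - c * f‖ * ‖a * conj e + b * conj f‖ := by
        rw [expand, ← norm_mul, ← norm_mul]
        exact norm_add_le _ _
    _ ≤ _ := by
        gcongr
        · exact norm_mul_conj_add_mul_conj_le c d e f
        · exact norm_mul_conj_add_mul_conj_le a b e f

lemma chordalDist_triangle {e f : 𝕜} (hef : e ≠ 0 ∨ f ≠ 0) (a b c d : 𝕜) :
    chordalDist a b c d ≤ chordalDist a b e f + chordalDist e f c d := by
  set Nab := √(‖a‖ ^ 2 + ‖b‖ ^ 2)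
  set Ncd := √(‖c‖ ^ 2 + ‖d‖ ^ 2)
  set Nef := √(‖e‖ ^ 2 + ‖f‖ ^ 2)
  have hNef : 0 < Nef := sqrt_norm_sq_add_norm_sq_pos hef
  rcases (mul_nonneg (Real.sqrt_nonneg _) (Real.sqrt_nonneg _) : 0 ≤ Nab * Ncd).eq_or_lt
    with hzero | hpos
  · rw [chordalDist, ← hzero, div_zero]
    exact add_nonneg (chordalDist_nonneg _ _ _ _) (chordalDist_nonneg _ _ _ _)
  have hNab : 0 < Nab := pos_of_mul_pos_left hpos (Real.sqrt_nonneg _)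
  have hNcd : 0 < Ncd := pos_of_mul_pos_right hpos (Real.sqrt_nonneg _)
  rw [chordalDist, chordalDist, chordalDist, div_add_div _ _ (by positivity) (by positivity),
    div_le_div_iff₀ hpos (by positivity)]
  nlinarith [mul_le_mul_of_nonneg_right (norm_mul_sub_mul_mul_le a b c d e f) hpos.le]

end ChordalDistance

lemma IsCoprimeFactorization.map_ne_zero_or {R K : Type*} [CommRing R] [Semiring K] [Nontrivial K]
    {n d : R} (h : IsCoprimeFactorization n d) (f : R →+* K) : f n ≠ 0 ∨ f d ≠ 0 := by
  obtain ⟨-, x, y, hxy⟩ := h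
  by_contra! hzero
  simpa [hzero] using congrArg f hxy

lemma IsCoprimeFactorization.character_ne_zero_or {R S : Type*} [CommRing R] [NormedCommRing S]
    [NormedAlgebra ℂ S] {n d : R} (h : IsCoprimeFactorization n d) (ι : R →+* S)
    (φ : characterSpace ℂ S) : φ (ι n) ≠ 0 ∨ φ (ι d) ≠ 0 :=
  h.map_ne_zero_or ((φ : S →+* ℂ).comp ι)

section GenChordal

variable {R S : Type*} [CommRing R] [NormedCommRing S] [NormedAlgebra ℂ S] [CompleteSpace S]
  (ι : R →+* S)

lemma genChordal_eq_iSup (n₁ d₁ n₂ d₂ : R) :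
    genChordal ι n₁ d₁ n₂ d₂ =
      ⨆ φ : characterSpace ℂ S, chordalDist (φ (ι n₁)) (φ (ι d₁)) (φ (ι n₂)) (φ (ι d₂)) :=
  rfl

lemma chordalDist_le_genChordal (n₁ d₁ n₂ d₂ : R) (φ : characterSpace ℂ S) :
    chordalDist (φ (ι n₁)) (φ (ι d₁)) (φ (ι n₂)) (φ (ι d₂)) ≤ genChordal ι n₁ d₁ n₂ d₂ := by
  refine le_ciSup (f := fun ψ : characterSpace ℂ S =>
    chordalDist (ψ (ι n₁)) (ψ (ι d₁)) (ψ (ι n₂)) (ψ (ι d₂))) ⟨1, ?_⟩ φ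
  rintro _ ⟨ψ, rfl⟩
  exact chordalDist_le_one _ _ _ _

lemma genChordal_nonneg (n₁ d₁ n₂ d₂ : R) : 0 ≤ genChordal ι n₁ d₁ n₂ d₂ :=
  Real.iSup_nonneg fun _ => chordalDist_nonneg _ _ _ _

lemma genChordal_comm (n₁ d₁ n₂ d₂ : R) :
    genChordal ι n₁ d₁ n₂ d₂ = genChordal ι n₂ d₂ n₁ d₁ := by
  simp only [genChordal_eq_iSup]
  exact iSup_congr fun φ => chordalDist_comm _ _ _ _

lemma genChordal_congr_left {n₁ d₁ n₁' d₁' : R} (h₁ : IsCoprimeFactorization n₁ d₁)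
    (h₁' : IsCoprimeFactorization n₁' d₁') (h : n₁ * d₁' = n₁' * d₁) (n₂ d₂ : R) :
    genChordal ι n₁ d₁ n₂ d₂ = genChordal ι n₁' d₁' n₂ d₂ := by
  simp only [genChordal_eq_iSup]
  refine iSup_congr fun φ => chordalDist_congr_left (h₁.character_ne_zero_or ι φ)
    (h₁'.character_ne_zero_or ι φ) ?_ _ _
  simpa only [map_mul] using congrArg (fun r => φ (ι r)) h

lemma genChordal_triangle {n₃ d₃ : R} (h₃ : IsCoprimeFactorization n₃ d₃) (n₁ d₁ n₂ d₂ : R) :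
    genChordal ι n₁ d₁ n₂ d₂ ≤ genChordal ι n₁ d₁ n₃ d₃ + genChordal ι n₃ d₃ n₂ d₂ := by
  refine Real.iSup_le (fun φ => ?_) (add_nonneg (genChordal_nonneg ..) (genChordal_nonneg ..))
  exact (chordalDist_triangle (h₃.character_ne_zero_or ι φ) _ _ _ _).trans <|
    add_le_add (chordalDist_le_genChordal ..) (chordalDist_le_genChordal ..)

lemma genChordal_eq_zero_iff (hsemi : ∀ s : S, (∀ φ : characterSpace ℂ S, φ s = 0) → s = 0)
    (hinj : Function.Injective ι) {n₁ d₁ n₂ d₂ : R} (h₁ : IsCoprimeFactorization n₁ d₁)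
    (h₂ : IsCoprimeFactorization n₂ d₂) :
    genChordal ι n₁ d₁ n₂ d₂ = 0 ↔ n₁ * d₂ = n₂ * d₁ := by
  have pointwise (φ : characterSpace ℂ S) :
      chordalDist (φ (ι n₁)) (φ (ι d₁)) (φ (ι n₂)) (φ (ι d₂)) = 0 ↔
        φ (ι (n₁ * d₂ - n₂ * d₁)) = 0 := by
    rw [chordalDist_eq_zero_iff (h₁.character_ne_zero_or ι φ) (h₂.character_ne_zero_or ι φ),
      map_sub, map_sub, sub_eq_zero, map_mul, map_mul, map_mul, map_mul]
  rw [← sub_eq_zero (a := n₁ * d₂), ← map_eq_zero_iff ι hinj]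
  constructor
  · intro hzero
    refine hsemi _ fun φ => (pointwise φ).mp (le_antisymm ?_ (chordalDist_nonneg ..))
    exact hzero ▸ chordalDist_le_genChordal ι n₁ d₁ n₂ d₂ φ
  · intro hzero
    simp only [genChordal_eq_iSup, fun φ => (pointwise φ).mpr (by rw [hzero, map_zero]),
      Real.iSup_const_zero]

end GenChordal

theorem genChordal_is_metric_general {R S : Type*} [CommRing R]
    [NormedCommRing S] [NormedAlgebra ℂ S] [CompleteSpace S]
    (hsemi : ∀ s : S, (∀ φ : characterSpace ℂ S, φ s = 0) → s = 0)
    (ι : R →+* S) (hinj : Function.Injective ι) :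
    (∀ n₁ d₁ nt₁ dt₁ n₂ d₂ : R, IsCoprimeFactorization n₁ d₁ →
        IsCoprimeFactorization nt₁ dt₁ → IsCoprimeFactorization n₂ d₂ →
        n₁ * dt₁ = nt₁ * d₁ →
        genChordal ι n₁ d₁ n₂ d₂ = genChordal ι nt₁ dt₁ n₂ d₂) ∧
    (∀ n₁ d₁ n₂ d₂ : R, IsCoprimeFactorization n₁ d₁ →
        IsCoprimeFactorization n₂ d₂ → 0 ≤ genChordal ι n₁ d₁ n₂ d₂) ∧
    (∀ n₁ d₁ n₂ d₂ : R, IsCoprimeFactorization n₁ d₁ →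
        IsCoprimeFactorization n₂ d₂ →
        genChordal ι n₁ d₁ n₂ d₂ = genChordal ι n₂ d₂ n₁ d₁) ∧
    (∀ n₁ d₁ n₂ d₂ : R, IsCoprimeFactorization n₁ d₁ →
        IsCoprimeFactorization n₂ d₂ →
        (genChordal ι n₁ d₁ n₂ d₂ = 0 ↔ n₁ * d₂ = n₂ * d₁)) ∧
    (∀ n₁ d₁ n₂ d₂ n₃ d₃ : R, IsCoprimeFactorization n₁ d₁ →
        IsCoprimeFactorization n₂ d₂ → IsCoprimeFactorization n₃ d₃ →
        genChordal ι n₁ d₁ n₂ d₂ ≤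
          genChordal ι n₁ d₁ n₃ d₃ + genChordal ι n₃ d₃ n₂ d₂) := by
  refine ⟨fun _ _ _ _ n₂ d₂ h₁ h₁' _ h => genChordal_congr_left ι h₁ h₁' h n₂ d₂,
    fun _ _ _ _ _ _ => genChordal_nonneg ι .., fun _ _ _ _ _ _ => genChordal_comm ι ..,
    fun _ _ _ _ h₁ h₂ => genChordal_eq_zero_iff ι hsemi hinj h₁ h₂,
    fun _ _ _ _ _ _ _ _ h₃ => genChordal_triangle ι h₃ ..⟩

/-- Let `R` be an integral domain embedded as a full subring of a complex
commutative unital semisimple Banach algebra `S`.  Then the generalized chordal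
distance `κ` is a metric on the set of coprime factorizable plants over `R`:
it is independent of the choice of coprime factorizations, nonnegative,
symmetric, vanishes exactly when the plants coincide (`n₁d₂ = n₂d₁`), and
satisfies the triangle inequality. -/
theorem genChordal_is_metric {R S : Type*} [CommRing R] [IsDomain R]
    [NormedCommRing S] [NormedAlgebra ℂ S] [CompleteSpace S]
    (hsemi : ∀ s : S, (∀ φ : characterSpace ℂ S, φ s = 0) → s = 0)
    (ι : R →+* S) (hinj : Function.Injective ι)
    (hfull : ∀ x : R, IsUnit (ι x) → IsUnit x) :
    (∀ n₁ d₁ nt₁ dt₁ n₂ d₂ : R, IsCoprimeFactorization n₁ d₁ →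
        IsCoprimeFactorization nt₁ dt₁ → IsCoprimeFactorization n₂ d₂ →
        n₁ * dt₁ = nt₁ * d₁ →
        genChordal ι n₁ d₁ n₂ d₂ = genChordal ι nt₁ dt₁ n₂ d₂) ∧
    (∀ n₁ d₁ n₂ d₂ : R, IsCoprimeFactorization n₁ d₁ →
        IsCoprimeFactorization n₂ d₂ → 0 ≤ genChordal ι n₁ d₁ n₂ d₂) ∧
    (∀ n₁ d₁ n₂ d₂ : R, IsCoprimeFactorization n₁ d₁ →
        IsCoprimeFactorization n₂ d₂ →
        genChordal ι n₁ d₁ n₂ d₂ = genChordal ι n₂ d₂ n₁ d₁) ∧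
    (∀ n₁ d₁ n₂ d₂ : R, IsCoprimeFactorization n₁ d₁ →
        IsCoprimeFactorization n₂ d₂ →
        (genChordal ι n₁ d₁ n₂ d₂ = 0 ↔ n₁ * d₂ = n₂ * d₁)) ∧
    (∀ n₁ d₁ n₂ d₂ n₃ d₃ : R, IsCoprimeFactorization n₁ d₁ →
        IsCoprimeFactorization n₂ d₂ → IsCoprimeFactorization n₃ d₃ →
        genChordal ι n₁ d₁ n₂ d₂ ≤
          genChordal ι n₁ d₁ n₃ d₃ + genChordal ι n₃ d₃ n₂ d₂) :=
  genChordal_is_metric_general hsemi ι hinj
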